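/- arXiv:2302.01253 — 2 statements merged into one kernel-verified Lean document; each statement's English description precedes it below -/
import Mathlib

section
/- For every nonnegative integer n, b_6(n) = Σ_{j ∈ ℤ} (-1)^j p(n - 3j(3j-1)), where p(x) = 0 when x is negative. -/
/-!
By Glaisher's theorem, partitions with no part divisible by `m` are equinumerous with partitions
in which no part occurs `m` or more times, so their generating function is
`∏ (1 + q^i + ⋯ + q^{(m-1)i}) = ∏ (1 - q^{mi}) / ∏ (1 - q^i)`. Euler's pentagonal number theorem
`∏ (1 - q^i) = ∑ₖ (-1)^k q^{k(3k-1)/2}`, used at `q^m` in the numerator, writes this as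
`(∑ₖ (-1)^k q^{m k(3k-1)/2}) · ∑ p(n) q^n`. For `m = 6` the exponents are `3k(3k-1)`, and comparing
coefficients of `q^n` gives the identity; only `|k| ≤ n` contribute.
-/

open Finset

/-- Euler's partition function. -/
def pnat (n : ℕ) : ℕ := Fintype.card (Nat.Partition n)

/-- `p` extended to integers, `0` on negatives. -/
def pz (x : ℤ) : ℤ := if 0 ≤ x then pnat x.toNat else 0

/-- Number of 6-regular partitions of `n` (no part divisible by 6). -/
def b6 (n : ℕ) : ℕ := Fintype.card {P : Nat.Partition n // ∀ i ∈ P.parts, ¬ (6 ∣ i)}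

open PowerSeries PowerSeries.WithPiTopology

section PowerSeriesIdentities

variable (R : Type*) [CommRing R]

theorem continuous_expand [UniformSpace R] [DiscreteUniformity R] {m : ℕ} (hm : m ≠ 0) :
    Continuous (expand m hm : R⟦X⟧ → R⟦X⟧) := by
  rw [show (expand m hm : R⟦X⟧ → R⟦X⟧) = subst (X ^ m) from funext (expand_apply m hm)]
  exact MvPowerSeries.continuous_subst (HasSubst.X_pow hm).const

/- The identities below involve no topology; giving `R` the discrete uniformity lets us prove them
from the infinite-product forms in Mathlib. -/

theorem partitionSeries_mul_pentagonalSeries :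
    (mk fun n ↦ (Fintype.card n.Partition : R)) * pentagonalSeries R = 1 := by
  let _ : UniformSpace R := ⊥
  have hP := Nat.Partition.hasProd_powerSeriesMk_card_restricted R (fun _ ↦ True)
  simp only [if_true, Nat.Partition.restricted, implies_true, filter_true, card_univ] at hP
  refine ((hP.mul (hasProd_one_sub_X_pow R)).congr_fun fun i ↦ ?_).unique hasProd_one
  simp_rw [pow_mul]
  exact (tsum_pow_mul_one_sub_of_constantCoeff_eq_zero (by simp)).symm

theorem restrictedSeries_not_dvd_mul_pentagonalSeries {m : ℕ} (hm : m ≠ 0) :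
    (mk fun n ↦ (#(Nat.Partition.restricted n (¬ m ∣ ·)) : R)) * pentagonalSeries R =
      expand m hm (pentagonalSeries R) := by
  let _ : UniformSpace R := ⊥
  simp_rw [Nat.Partition.card_restricted_eq_card_countRestricted _ (Nat.pos_of_ne_zero hm)]
  have hC := Nat.Partition.hasProd_powerSeriesMk_card_countRestricted R (Nat.pos_of_ne_zero hm)
  have hE := hasProd_one_sub_X_pow R
  refine ((hC.mul hE).congr_fun fun i ↦ ?_).unique (hE.map _ (continuous_expand R hm))
  simp_rw [Function.comp_apply, map_sub, map_one, map_pow, expand_X, pow_mul,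
    geom_sum_mul_neg, ← pow_mul, mul_comm]

theorem restrictedSeries_not_dvd_eq {m : ℕ} (hm : m ≠ 0) :
    (mk fun n ↦ (#(Nat.Partition.restricted n (¬ m ∣ ·)) : R)) =
      (mk fun n ↦ (Fintype.card n.Partition : R)) * expand m hm (pentagonalSeries R) := by
  set B := mk fun n ↦ (#(Nat.Partition.restricted n (¬ m ∣ ·)) : R)
  set P := mk fun n ↦ (Fintype.card n.Partition : R)
  calc B = B * (P * pentagonalSeries R) := by rw [partitionSeries_mul_pentagonalSeries, mul_one]
    _ = P * (B * pentagonalSeries R) := by ring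
    _ = P * expand m hm (pentagonalSeries R) := by
      rw [restrictedSeries_not_dvd_mul_pentagonalSeries]

theorem coeff_mul_expand_pentagonalSeries (f : R⟦X⟧) {m : ℕ} (hm : m ≠ 0) (n : ℕ)
    (s : Finset ℤ) (hs : ∀ k, m * pentagonal k ≤ n → k ∈ s) :
    coeff n (f * expand m hm (pentagonalSeries R)) = ∑ k ∈ s, (-1) ^ k.natAbs *
        if m * pentagonal k ≤ n then coeff (n - m * pentagonal k) f else 0 := by
  let _ : UniformSpace R := ⊥
  have h := (((hasSum_pentagonalSeries R).map (expand m hm) (continuous_expand R hm)).mul_left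
    f).map (coeff n) (continuous_coeff R n)
  have hterm (k : ℤ) : coeff n (f * expand m hm ((k.negOnePow : R⟦X⟧) * X ^ pentagonal k)) =
      (-1) ^ k.natAbs * if m * pentagonal k ≤ n then coeff (n - m * pentagonal k) f else 0 := by
    rw [map_mul (expand m hm), map_intCast, Int.coe_negOnePow, map_pow, expand_X, ← pow_mul,
      mul_left_comm, ← map_one C, ← map_neg C, ← map_pow, coeff_C_mul, coeff_mul_X_pow']
  simp only [Function.comp_def, hterm] at h
  refine h.unique (hasSum_sum_of_ne_finset_zero fun k hk ↦ ?_)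
  rw [if_neg (mt (hs k) hk), mul_zero]

end PowerSeriesIdentities

theorem b6_eq_card_restricted (n : ℕ) : b6 n = #(Nat.Partition.restricted n (¬ 6 ∣ ·)) :=
  Fintype.card_subtype _

theorem pz_natCast_sub (n m : ℕ) :
    pz ((n : ℤ) - m) = if m ≤ n then (pnat (n - m) : ℤ) else 0 := by
  unfold pz
  split_ifs with _ hmn
  · rw [← Nat.cast_sub hmn, Int.toNat_natCast]
  all_goals omega

theorem mem_Icc_of_mul_pentagonal_le {m n : ℕ} {k : ℤ} (hm : 0 < m)
    (h : m * pentagonal k ≤ n) : k ∈ Icc (-(n : ℤ) - 1) ((n : ℤ) + 1) := by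
  have h2 := two_mul_natCast_pentagonal k
  have hle : (pentagonal k : ℤ) ≤ n := by exact_mod_cast (Nat.le_mul_of_pos_left _ hm).trans h
  rw [mem_Icc]
  constructor <;> nlinarith

theorem stmt5 (n : ℕ) :
    (b6 n : ℤ) =
      ∑ j ∈ Finset.Icc (-(n : ℤ) - 1) ((n : ℤ) + 1),
        (-1) ^ j.natAbs * pz ((n : ℤ) - 3 * j * (3 * j - 1)) := by
  have hseries := congrArg (coeff n) (restrictedSeries_not_dvd_eq ℤ (m := 6) (by norm_num))
  rw [coeff_mk, ← b6_eq_card_restricted] at hseries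
  rw [hseries, coeff_mul_expand_pentagonalSeries ℤ _ _ n _
    fun k ↦ mem_Icc_of_mul_pentagonal_le (by norm_num)]
  refine sum_congr rfl fun k _ ↦ ?_
  have h6 : 3 * k * (3 * k - 1) = ((6 * pentagonal k : ℕ) : ℤ) := by
    push_cast
    linear_combination -3 * two_mul_natCast_pentagonal k
  rw [h6, pz_natCast_sub, coeff_mk, pnat]
end

section
/- For every nonnegative integer n, Σ_{j ∈ ℤ} p(n - 3j(3j-1)) ≡ Q_2(n) (mod 2), where p(x) = 0 for x negative. -/
open Finset

/-- Number of partitions of `n` into distinct parts not congruent to ±2 mod 6. -/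
def Q2 (n : ℕ) : ℕ :=
  Fintype.card {P : Nat.Partition n // P.parts.Nodup ∧ ∀ i ∈ P.parts, i % 6 ≠ 2 ∧ i % 6 ≠ 4}

/-!
Over `𝔽₂`, the left-hand side is the `n`-th coefficient of `(∑ⱼ X^{3j(3j-1)}) · ∑ₘ p(m) Xᵐ`.
The pentagonal number theorem, with `X` replaced by `X⁶`, turns the first factor into
`∏ₖ (1 - X^{6k})`. The second factor is `∏ₖ (1 - X^k)⁻¹ = ∏ₖ (1 + X^k)⁻¹`, and Euler's
odd/distinct theorem `∏ₖ (1 + X^k) = ∏_{k odd} (1 - X^k)⁻¹` makes it `∏_{k odd} (1 + X^k)`.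
The product is therefore `∏ (1 + X^k)` over `k` odd or divisible by `6`, that is over
`k ≢ ±2 (mod 6)`, which generates `Q₂`.
-/

open PowerSeries PowerSeries.WithPiTopology

theorem HasProd.mul_eq_one {ι M : Type*} [CommMonoid M] [TopologicalSpace M] [ContinuousMul M]
    [T2Space M] {f g : ι → M} {a b : M} (hf : HasProd f a) (hg : HasProd g b)
    (hfg : ∀ i, f i * g i = 1) : a * b = 1 :=
  (hf.mul hg).unique (by simpa only [hfg] using hasProd_one)

instance PowerSeries.instCharP {R : Type*} [CommSemiring R] (p : ℕ) [CharP R p] :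
    CharP R⟦X⟧ p :=
  charP_of_injective_ringHom (C_injective (R := R)) p

theorem PowerSeries.WithPiTopology.continuous_expand {R : Type*} [CommRing R]
    [TopologicalSpace R] (p : ℕ) (hp : p ≠ 0) : Continuous (expand p hp : R⟦X⟧ → R⟦X⟧) := by
  refine continuous_iff_continuousAt.2 fun f ↦ (tendsto_iff_coeff_tendsto _ _ _ _).2 fun d ↦ ?_
  simp_rw [coeff_expand]
  split_ifs
  · exact (continuous_coeff R _).tendsto _
  · exact tendsto_const_nhds

namespace Nat.Partition

section Semiring
variable {R : Type*} [CommSemiring R] [TopologicalSpace R] [T2Space R]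

theorem hasProd_powerSeriesMk_card_nodup_restricted (q : ℕ → Prop) [DecidablePred q] :
    HasProd (fun i ↦ if q (i + 1) then 1 + X ^ (i + 1) else 1)
      (PowerSeries.mk fun n ↦ (#{p : n.Partition | p.parts.Nodup ∧ ∀ i ∈ p.parts, q i} : R)) := by
  convert! hasProd_genFun (fun i c ↦ if q i ∧ c = 1 then (1 : R) else 0) using 1
  · ext1 i
    rw [tsum_eq_single 0 (fun j hj ↦ by simp [hj])]
    by_cases h : q (i + 1) <;> simp [h]
  · simp_rw [genFun, card_filter, Finsupp.prod, prod_boole]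
    simp [Multiset.nodup_iff_count_eq_one, imp_and, forall_and, and_comm]

theorem hasProd_powerSeriesMk_card [IsTopologicalSemiring R] :
    HasProd (fun i ↦ ∑' j : ℕ, (X : R⟦X⟧) ^ ((i + 1) * j))
      (PowerSeries.mk fun n ↦ (Fintype.card n.Partition : R)) := by
  simpa [restricted] using hasProd_powerSeriesMk_card_restricted R (fun _ ↦ True)

end Semiring

section Ring
variable (R : Type*) [CommRing R]

theorem powerSeriesMk_card_mul_pentagonalSeries :
    (PowerSeries.mk fun n ↦ (Fintype.card n.Partition : R)) * pentagonalSeries R = 1 := by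
  let _ : TopologicalSpace R := ⊥
  have _ : DiscreteTopology R := ⟨rfl⟩
  refine hasProd_powerSeriesMk_card.mul_eq_one (hasProd_one_sub_X_pow R) fun i ↦ ?_
  simp_rw [pow_mul]
  exact tsum_pow_mul_one_sub_of_constantCoeff_eq_zero (by simp)

theorem coeff_X_pow_mul_powerSeriesMk_card (n e : ℕ) :
    coeff n (X ^ e * PowerSeries.mk fun m ↦ (Fintype.card m.Partition : R)) =
      (pz (n - e) : R) := by
  rw [coeff_X_pow_mul', pz]
  split_ifs
  · rw [coeff_mk, pnat, show ((n : ℤ) - e).toNat = n - e by omega]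
    simp
  · omega
  · omega
  · simp

theorem coeff_expand_pentagonalSeries_mul_powerSeriesMk_card (n : ℕ) :
    coeff n (expand 6 (by norm_num) (pentagonalSeries R) *
        PowerSeries.mk fun m ↦ (Fintype.card m.Partition : R)) =
      ∑ j ∈ Icc (-(n : ℤ) - 1) (n + 1), (j.negOnePow : R) * pz (n - 3 * j * (3 * j - 1)) := by
  let _ : TopologicalSpace R := ⊥
  have _ : DiscreteTopology R := ⟨rfl⟩
  have hterm (j : ℤ) :
      coeff n (expand 6 (by norm_num) ((j.negOnePow : R⟦X⟧) * X ^ pentagonal j) *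
        PowerSeries.mk fun m ↦ (Fintype.card m.Partition : R)) =
        (j.negOnePow : R) * pz (n - 3 * j * (3 * j - 1)) := by
    have h6 : ((6 * pentagonal j : ℕ) : ℤ) = 3 * j * (3 * j - 1) := by
      push_cast
      linear_combination 3 * two_mul_natCast_pentagonal j
    simp only [map_mul, map_intCast, map_pow, expand_X]
    rw [← pow_mul, mul_assoc, ← map_intCast (C (R := R)), coeff_C_mul,
      coeff_X_pow_mul_powerSeriesMk_card, h6]
  have hsum := ((hasSum_pentagonalSeries R).map (expand 6 (by norm_num)) (continuous_expand 6 _))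
    |>.mul_right (PowerSeries.mk fun m ↦ (Fintype.card m.Partition : R))
    |>.map (coeff n) (continuous_coeff R n)
  refine hsum.unique ?_
  simp only [Function.comp_def, hterm]
  refine hasSum_sum_of_ne_finset_zero fun j hj ↦ ?_
  rw [mem_Icc, not_and_or, not_le, not_le] at hj
  have hneg : (n : ℤ) - 3 * j * (3 * j - 1) < 0 := by rcases hj with hj | hj <;> nlinarith
  rw [pz, if_neg hneg.not_ge, Int.cast_zero, mul_zero]

end Ring

section CharTwo

theorem hasProd_one_add_X_pow_pentagonalSeries :
    HasProd (fun i ↦ 1 + X ^ (i + 1)) (pentagonalSeries (ZMod 2)) := by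
  simpa only [CharTwo.sub_eq_add] using hasProd_one_sub_X_pow (ZMod 2)

theorem pentagonalSeries_eq_powerSeriesMk_card_odds :
    pentagonalSeries (ZMod 2) = PowerSeries.mk fun n ↦ (#(odds n) : ZMod 2) :=
  hasProd_one_add_X_pow_pentagonalSeries.unique <| by
    simpa [card_odds_eq_card_distincts, distincts] using
      hasProd_powerSeriesMk_card_nodup_restricted (R := ZMod 2) (fun _ ↦ True)

theorem powerSeriesMk_card_nodup_odd_mul_pentagonalSeries :
    (PowerSeries.mk fun n ↦
      (#{p : n.Partition | p.parts.Nodup ∧ ∀ i ∈ p.parts, ¬Even i} : ZMod 2)) *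
      pentagonalSeries (ZMod 2) = 1 := by
  rw [pentagonalSeries_eq_powerSeriesMk_card_odds]
  refine (hasProd_powerSeriesMk_card_nodup_restricted _).mul_eq_one
    (hasProd_powerSeriesMk_card_restricted (ZMod 2) (¬Even ·)) fun i ↦ ?_
  split_ifs
  · exact one_mul 1
  · rw [← CharTwo.sub_eq_add, mul_comm]
    simp_rw [pow_mul]
    exact tsum_pow_mul_one_sub_of_constantCoeff_eq_zero (by simp)

theorem hasProd_one_add_X_pow_odd_powerSeriesMk_card :
    HasProd (fun i ↦ if ¬Even (i + 1) then 1 + X ^ (i + 1) else 1)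
      (PowerSeries.mk fun n ↦ (Fintype.card n.Partition : ZMod 2)) := by
  have hP := powerSeriesMk_card_mul_pentagonalSeries (ZMod 2)
  have hO := powerSeriesMk_card_nodup_odd_mul_pentagonalSeries
  rw [mul_comm] at hP hO
  rw [inv_unique hP hO]
  exact hasProd_powerSeriesMk_card_nodup_restricted _

theorem hasProd_one_add_X_pow_expand_pentagonalSeries (d : ℕ) (hd : d ≠ 0) :
    HasProd (fun i ↦ if d ∣ i + 1 then 1 + X ^ (i + 1) else 1)
      (expand d hd (pentagonalSeries (ZMod 2))) := by
  have hinj : Function.Injective fun i ↦ d * i + (d - 1) := fun a b h ↦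
    Nat.eq_of_mul_eq_mul_left (Nat.pos_of_ne_zero hd) (Nat.add_right_cancel h)
  rw [← hinj.hasProd_iff]
  · convert hasProd_one_add_X_pow_pentagonalSeries.map (expand d hd) (continuous_expand d hd)
      using 1
    ext1 i
    have : d * i + (d - 1) + 1 = d * (i + 1) := by
      rw [mul_add, mul_one, add_assoc, Nat.sub_add_cancel (Nat.one_le_iff_ne_zero.2 hd)]
    simp [this, pow_mul]
  · rintro k hk
    rw [if_neg]
    rintro ⟨c, hc⟩
    obtain ⟨c, rfl⟩ : ∃ c', c = c' + 1 := ⟨c - 1, by rcases c with _ | c <;> simp_all⟩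
    exact hk ⟨c, show d * c + (d - 1) = k by rw [mul_add_one] at hc; omega⟩

theorem expand_pentagonalSeries_mul_powerSeriesMk_card :
    expand 6 (by norm_num) (pentagonalSeries (ZMod 2)) *
        (PowerSeries.mk fun n ↦ (Fintype.card n.Partition : ZMod 2)) =
      PowerSeries.mk fun n ↦
        (#{p : n.Partition | p.parts.Nodup ∧ ∀ i ∈ p.parts, i % 6 ≠ 2 ∧ i % 6 ≠ 4} : ZMod 2) := by
  have hmul : ∀ k, ((if 6 ∣ k then 1 + X ^ k else 1) * if ¬Even k then 1 + X ^ k else 1 :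
      (ZMod 2)⟦X⟧) = if k % 6 ≠ 2 ∧ k % 6 ≠ 4 then 1 + X ^ k else 1 := fun k ↦ by
    simp only [Nat.even_iff, Nat.dvd_iff_mod_eq_zero]
    split_ifs <;> first | omega | simp
  have h := (hasProd_one_add_X_pow_expand_pentagonalSeries 6 (by norm_num)).mul
    hasProd_one_add_X_pow_odd_powerSeriesMk_card
  simp only [hmul] at h
  exact h.unique (hasProd_powerSeriesMk_card_nodup_restricted _)

end CharTwo

end Nat.Partition

theorem stmt11 (n : ℕ) :
    (∑ j ∈ Finset.Icc (-(n : ℤ) - 1) ((n : ℤ) + 1),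
        pz ((n : ℤ) - 3 * j * (3 * j - 1))) ≡ (Q2 n : ℤ) [ZMOD 2] := by
  have h := Nat.Partition.coeff_expand_pentagonalSeries_mul_powerSeriesMk_card (ZMod 2) n
  rw [Nat.Partition.expand_pentagonalSeries_mul_powerSeriesMk_card, coeff_mk] at h
  refine (ZMod.intCast_eq_intCast_iff _ _ 2).1 ?_
  have hsign (j : ℤ) : ((j.negOnePow : ℤ) : ZMod 2) = 1 := by
    rcases Int.units_eq_one_or j.negOnePow with hj | hj <;> simp [hj]
  rw [Int.cast_natCast, Q2, Fintype.card_subtype, h, Int.cast_sum]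
  simp [hsign]
end
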